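/- Let A ⊆ ℕ₀ be a finite 3-free set, S(A) the Stanley sequence generated by A, and S(A,x) its counting function. Then for every ε > 0 there exists x₀ = x₀(ε, A) such that for all x ≥ x₀, S(A,x) > x^{1/2 − ε}. -/

import Mathlib

/-- A set of nonnegative integers is 3-free if it contains no three-term
arithmetic progression `a < b < c` with `a + c = 2b`. -/
def ThreeFree (S : Set ℕ) : Prop :=
  ∀ a ∈ S, ∀ b ∈ S, ∀ c ∈ S, a < b → b < c → a + c ≠ 2 * b

/-- `stanleyBelow A n` is the set of elements of the Stanley sequence generated by `A`
that are smaller than `n`: at stage `n` we include `n` itself if `n ∈ A`, or if `n`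
exceeds every element of `A` and adjoining `n` to everything chosen so far stays 3-free
(the greedy rule). -/
def stanleyBelow (A : Finset ℕ) : ℕ → Set ℕ
  | 0 => ∅
  | n + 1 => stanleyBelow A n ∪
      {m | m = n ∧ (n ∈ A ∨ ((∀ a ∈ A, a < n) ∧ ThreeFree (stanleyBelow A n ∪ {n})))}

/-- The Stanley sequence `S(A)` generated by `A`, as a set of nonnegative integers. -/
def stanley (A : Finset ℕ) : Set ℕ := ⋃ n, stanleyBelow A n

/-- The counting function `S(A,x) = #{s ∈ S(A) : s ≤ x}`. -/
noncomputable def stanleyCount (A : Finset ℕ) (x : ℝ) : ℕ :=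
  Nat.card {s : ℕ | s ∈ stanley A ∧ (s : ℝ) ≤ x}

/-- `H S n = #{(s₁,s₂) : s₁,s₂ ∈ S, s₁ < s₂, n = 2s₂ - s₁}`. -/
noncomputable def H (S : Set ℕ) (n : ℕ) : ℕ :=
  Nat.card {p : ℕ × ℕ | p.1 ∈ S ∧ p.2 ∈ S ∧ p.1 < p.2 ∧ n + p.1 = 2 * p.2}

/-! An integer `n > max A` is left out of `S(A)` only because it completes a progression
`a < b < n` inside `S(A)`, i.e. `n = 2b - a`. So if `t = S(A, N)`, every integer in `(max A, N]`
is either one of the `t` elements of `S(A)` up to `N` or one of the at most `t²` numbers `2b - a`;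
hence `N ≤ t² + t + max A`, and `S(A, x)` grows like `√x`, faster than `x ^ (1/2 - ε)`. -/

open Filter Asymptotics Finset

theorem ThreeFree.mono {S T : Set ℕ} (hT : ThreeFree T) (h : S ⊆ T) : ThreeFree S :=
  fun a ha b hb c hc => hT a (h ha) b (h hb) c (h hc)

theorem ThreeFree.exists_add_eq_two_mul_of_not_union {S : Set ℕ} (hS : ThreeFree S) {n : ℕ}
    (hn : ∀ s ∈ S, s < n) (h : ¬ ThreeFree (S ∪ {n})) :
    ∃ a ∈ S, ∃ b ∈ S, b < n ∧ n + a = 2 * b := by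
  simp only [ThreeFree, Set.union_singleton, Set.mem_insert_iff, not_forall, not_not] at h
  obtain ⟨a, ha, b, hb, c, hc, hab, hbc, habc⟩ := h
  have hbS : b ∈ S := hb.resolve_left fun hbn => by
    rcases hc with rfl | hc
    · omega
    · exact (hn c hc).not_gt (hbn ▸ hbc)
  have haS : a ∈ S := ha.resolve_left fun han => (hn b hbS).not_gt (han ▸ hab)
  rcases hc with rfl | hcS
  · exact ⟨a, haS, b, hbS, hbc, by omega⟩
  · exact absurd habc (hS a haS b hbS c hcS hab hbc)

section stanleyBelow

variable {A : Finset ℕ} {m n : ℕ}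

theorem lt_of_mem_stanleyBelow (h : m ∈ stanleyBelow A n) : m < n := by
  induction n with
  | zero => exact absurd h (Set.notMem_empty m)
  | succ n ih =>
    rcases h with h | ⟨rfl, -⟩
    · exact (ih h).trans n.lt_succ_self
    · exact m.lt_succ_self

theorem mem_or_forall_lt_of_mem_stanleyBelow (h : m ∈ stanleyBelow A n) :
    m ∈ A ∨ ∀ a ∈ A, a < m := by
  induction n with
  | zero => exact absurd h (Set.notMem_empty m)
  | succ n ih =>
    rcases h with h | ⟨rfl, hA | hA⟩
    · exact ih h
    · exact Or.inl hA
    · exact Or.inr hA.1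

theorem mem_stanley_of_mem_stanleyBelow (h : m ∈ stanleyBelow A n) : m ∈ stanley A :=
  Set.mem_iUnion.2 ⟨n, h⟩

theorem threeFree_stanleyBelow (hA : ThreeFree ↑A) (n : ℕ) : ThreeFree (stanleyBelow A n) := by
  induction n with
  | zero => exact fun a ha => absurd ha (Set.notMem_empty a)
  | succ n ih =>
    by_cases hnA : n ∈ A
    · -- once `n ∈ A`, everything chosen so far lies in `A`
      refine hA.mono fun m hm => ?_
      rcases hm with hm | ⟨rfl, -⟩
      · exact (mem_or_forall_lt_of_mem_stanleyBelow hm).resolve_right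
          fun h => (h n hnA).not_gt (lt_of_mem_stanleyBelow hm)
      · exact hnA
    by_cases hfree : ThreeFree (stanleyBelow A n ∪ {n})
    · exact hfree.mono fun m hm => hm.imp_right And.left
    · exact ih.mono fun m hm => hm.elim id fun h => (h.2.elim hnA fun h' => hfree h'.2).elim

end stanleyBelow

theorem exists_add_eq_two_mul_of_notMem_stanley {A : Finset ℕ} (hA : ThreeFree ↑A) {n : ℕ}
    (hAn : ∀ a ∈ A, a < n) (hn : n ∉ stanley A) :
    ∃ a ∈ stanley A, ∃ b ∈ stanley A, b < n ∧ n + a = 2 * b := by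
  have hfree : ¬ ThreeFree (stanleyBelow A n ∪ {n}) := fun hfree =>
    hn (mem_stanley_of_mem_stanleyBelow (n := n + 1) (Or.inr ⟨rfl, Or.inr ⟨hAn, hfree⟩⟩))
  obtain ⟨a, ha, b, hb, hbn, hab⟩ :=
    (threeFree_stanleyBelow hA n).exists_add_eq_two_mul_of_not_union
      (fun _ => lt_of_mem_stanleyBelow) hfree
  exact ⟨a, mem_stanley_of_mem_stanleyBelow ha, b, mem_stanley_of_mem_stanleyBelow hb, hbn, hab⟩

theorem le_card_mul_card_add_card_add_of_blocked {S : Set ℕ} [DecidablePred (· ∈ S)] {M : ℕ}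
    (hblock : ∀ n, M < n → n ∉ S → ∃ a ∈ S, ∃ b ∈ S, b < n ∧ n + a = 2 * b) (N : ℕ) :
    N ≤ #{s ∈ Iic N | s ∈ S} * #{s ∈ Iic N | s ∈ S} + #{s ∈ Iic N | s ∈ S} + M := by
  set T := {s ∈ Iic N | s ∈ S}
  have hcover : Ioc M N ⊆ T ∪ (T ×ˢ T).image fun p => 2 * p.2 - p.1 := by
    intro n hn
    rw [mem_Ioc] at hn
    by_cases hnS : n ∈ S
    · exact mem_union_left _ (mem_filter.2 ⟨mem_Iic.2 hn.2, hnS⟩)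
    obtain ⟨a, haS, b, hbS, hbn, hab⟩ := hblock n hn.1 hnS
    refine mem_union_right _ (mem_image.2 ⟨(a, b), mem_product.2 ⟨?_, ?_⟩, by omega⟩) <;>
      refine mem_filter.2 ⟨mem_Iic.2 (by omega), ‹_›⟩
  have hcard := (card_le_card hcover).trans
    ((card_union_le _ _).trans (Nat.add_le_add_left card_image_le _))
  rw [Nat.card_Ioc, card_product] at hcard
  omega

theorem stanleyCount_eq_card_filter_Iic (A : Finset ℕ) [DecidablePred (· ∈ stanley A)]
    {x : ℝ} (hx : 0 ≤ x) : stanleyCount A x = #{s ∈ Iic ⌊x⌋₊ | s ∈ stanley A} := by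
  have hset : {s : ℕ | s ∈ stanley A ∧ (s : ℝ) ≤ x} =
      ↑{s ∈ Iic ⌊x⌋₊ | s ∈ stanley A} := by
    ext s
    simp [Nat.le_floor_iff hx, and_comm]
  rw [stanleyCount, hset, Nat.card_coe_set_eq, Set.ncard_coe_finset]

theorem sub_lt_sq_stanleyCount {A : Finset ℕ} (hA : ThreeFree ↑A) {x : ℝ} (hx : 0 ≤ x) :
    x - A.sup id < ((stanleyCount A x : ℝ) + 1) ^ 2 := by
  classical
  have hblock : ∀ n, A.sup id < n → n ∉ stanley A →
      ∃ a ∈ stanley A, ∃ b ∈ stanley A, b < n ∧ n + a = 2 * b := fun n hn =>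
    exists_add_eq_two_mul_of_notMem_stanley hA fun a ha => (le_sup (f := id) ha).trans_lt hn
  have hN := le_card_mul_card_add_card_add_of_blocked hblock ⌊x⌋₊
  rw [stanleyCount_eq_card_filter_Iic A hx]
  set t := #{s ∈ Iic ⌊x⌋₊ | s ∈ stanley A}
  have hN' : (⌊x⌋₊ : ℝ) ≤ t * t + t + A.sup id := by exact_mod_cast hN
  nlinarith [Nat.lt_floor_add_one x]

theorem isLittleO_rpow_rpow_atTop {a b : ℝ} (hab : a < b) :
    (fun x : ℝ => x ^ a) =o[atTop] fun x => x ^ b := by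
  refine (isLittleO_iff_tendsto' ?_).2 ((tendsto_rpow_neg_atTop (sub_pos.2 hab)).congr' ?_)
  · filter_upwards [eventually_gt_atTop 0] with x hx h0
    exact absurd h0 (Real.rpow_pos_of_pos hx b).ne'
  · filter_upwards [eventually_gt_atTop 0] with x hx
    rw [← Real.rpow_sub hx, neg_sub]

theorem eventually_sq_rpow_add_one_add_le {δ : ℝ} (hδ : δ < 1 / 2) (C : ℝ) :
    ∀ᶠ x : ℝ in atTop, (x ^ δ + 1) ^ 2 + C ≤ x := by
  have hsqrt : (fun x : ℝ => x ^ δ + 1) =o[atTop] fun x => x ^ (1 / 2 : ℝ) := by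
    exact (isLittleO_rpow_rpow_atTop hδ).add ((isLittleO_rpow_rpow_atTop
      (show (0 : ℝ) < 1 / 2 by norm_num)).congr_left fun x => Real.rpow_zero x)
  have hlin : (fun x : ℝ => (x ^ δ + 1) ^ 2 + C) =o[atTop] id := by
    refine IsLittleO.add ?_ (isLittleO_const_id_atTop C)
    refine (hsqrt.mul hsqrt).congr' (Eventually.of_forall fun x => (sq _).symm) ?_
    filter_upwards [eventually_ge_atTop 0] with x hx
    rw [← Real.rpow_add' hx (by norm_num)]
    norm_num
  filter_upwards [hlin.bound one_pos, eventually_ge_atTop 0] with x hbound hx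
  exact (le_abs_self _).trans (by simpa [abs_of_nonneg hx] using hbound)

/-- for every `ε > 0` there is `x₀` such that
`S(A,x) > x^(1/2 - ε)` for all `x ≥ x₀`. -/
theorem count_gt_rpow (A : Finset ℕ) (hA3 : ThreeFree ↑A) :
    ∀ ε : ℝ, 0 < ε → ∃ x₀ : ℝ, ∀ x : ℝ, x₀ ≤ x →
      x ^ ((1 : ℝ) / 2 - ε) < (stanleyCount A x : ℝ) := by
  intro ε hε
  refine eventually_atTop.1 ?_
  filter_upwards [eventually_sq_rpow_add_one_add_le (by linarith : 1 / 2 - ε < 1 / 2)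
    ((A.sup id : ℕ) : ℝ), eventually_ge_atTop 0] with x hx hx0
  have hsq : (x ^ (1 / 2 - ε) + 1) ^ 2 < ((stanleyCount A x : ℝ) + 1) ^ 2 := by
    linarith [sub_lt_sq_stanleyCount hA3 hx0]
  linarith [lt_of_pow_lt_pow_left₀ 2 (by positivity) hsq]
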